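/- For every complex number z, ∫_0^1 exp(-(1-ξ²) z / 4) dξ = ∑_{k=0}^∞ (-z)^k · k! / (2k+1)!, where the series converges absolutely for all z. -/

import Mathlib

/-!
Expand the exponential in its power series and integrate term by term, which dominated
convergence allows because the integrand is bounded on `[0, 1]`. The `k`-th term then
involves the Wallis-type integral `∫₀¹ (1 - ξ²)ᵏ dξ = 4ᵏ k!² / (2k+1)!`, obtained from the
substitution `ξ = sin θ` and the reduction formula for `∫ cos^(2k+1)`.
-/

open MeasureTheory Real intervalIntegral Nat

theorem integral_one_sub_sq_pow_eq_integral_cos_pow (n : ℕ) :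
    ∫ x in (0 : ℝ)..1, (1 - x ^ 2) ^ n = ∫ x in (0 : ℝ)..(π / 2), cos x ^ (2 * n + 1) := by
  simpa using (integral_sin_pow_mul_cos_pow_odd (a := 0) (b := π / 2) 0 n).symm

theorem integral_one_sub_sq_pow_succ (n : ℕ) :
    ∫ x in (0 : ℝ)..1, (1 - x ^ 2) ^ (n + 1) =
      (2 * n + 2 : ℝ) / (2 * n + 3) * ∫ x in (0 : ℝ)..1, (1 - x ^ 2) ^ n := by
  rw [integral_one_sub_sq_pow_eq_integral_cos_pow, integral_one_sub_sq_pow_eq_integral_cos_pow,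
    show 2 * (n + 1) + 1 = 2 * n + 1 + 2 by ring, integral_cos_pow, cos_pi_div_two, sin_zero,
    zero_pow (by omega)]
  push_cast
  ring

theorem integral_one_sub_sq_pow (n : ℕ) :
    ∫ x in (0 : ℝ)..1, (1 - x ^ 2) ^ n = 4 ^ n * (n ! : ℝ) ^ 2 / (2 * n + 1)! := by
  induction n with
  | zero => simp
  | succ k ih =>
    rw [integral_one_sub_sq_pow_succ, ih, show 2 * (k + 1) + 1 = 2 * k + 1 + 1 + 1 by ring]
    simp only [factorial_succ, cast_mul, cast_add, cast_ofNat, cast_one]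
    field_simp
    ring

theorem factorial_mul_factorial_le_factorial_two_mul_add_one (k : ℕ) :
    k ! * k ! ≤ (2 * k + 1)! :=
  (Nat.le_of_dvd (factorial_pos _) (factorial_mul_factorial_dvd_factorial_add k k)).trans
    (factorial_le (by omega))

theorem hasSum_intervalIntegral_pow_div_factorial {f : ℝ → ℂ} (hf : Continuous f) (a b : ℝ) :
    HasSum (fun n : ℕ => ∫ t in a..b, f t ^ n / n !) (∫ t in a..b, Complex.exp (f t)) := by
  obtain ⟨C, hC⟩ := (isCompact_uIcc (a := a) (b := b)).exists_bound_of_continuousOn hf.continuousOn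
  refine hasSum_integral_of_dominated_convergence (fun n _ => C ^ n / n !)
    (fun n => (by fun_prop : Continuous fun t => f t ^ n / n !).aestronglyMeasurable)
    (fun n => .of_forall fun t ht => ?_) (.of_forall fun _ _ => summable_pow_div_factorial C)
    intervalIntegrable_const (.of_forall fun t _ => ?_)
  · rw [norm_div, norm_pow, Complex.norm_natCast]
    gcongr
    exact hC t (Set.uIoc_subset_uIcc ht)
  · rw [Complex.exp_eq_exp_ℂ]
    exact NormedSpace.expSeries_div_hasSum_exp (f t)

theorem integral_mul_one_sub_sq_pow_div_factorial (w : ℂ) (k : ℕ) :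
    ∫ t in (0 : ℝ)..1, (-w / 4 * ((1 - t ^ 2 : ℝ) : ℂ)) ^ k / k ! =
      (-w) ^ k * k ! / (2 * k + 1)! := by
  simp_rw [mul_pow, mul_div_right_comm, intervalIntegral.integral_const_mul,
    ← Complex.ofReal_pow, integral_ofReal, integral_one_sub_sq_pow]
  push_cast
  rw [div_pow]
  field_simp

theorem summable_norm_pow_mul_factorial_div_factorial_two_mul_add_one (w : ℂ) :
    Summable fun k : ℕ => ‖(-w) ^ k * k ! / (2 * k + 1)!‖ := by
  refine .of_nonneg_of_le (fun _ => norm_nonneg _) (fun k => ?_) (summable_pow_div_factorial ‖w‖)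
  rw [norm_div, norm_mul, norm_pow, norm_neg, Complex.norm_natCast, Complex.norm_natCast,
    div_le_div_iff₀ (by positivity) (by positivity), mul_assoc]
  gcongr
  exact_mod_cast factorial_mul_factorial_le_factorial_two_mul_add_one k

/-- Integral representation of the entire form factor
`γ^{(1)}(z) = ∫_0^1 exp(-(1-ξ²)z/4) dξ = ∑_{k≥0} (-z)^k k!/(2k+1)!`,
with absolute convergence of the series for every `z`. -/
theorem stmt_3 (z : ℂ) :
    (∫ ξ in (0:ℝ)..1, Complex.exp (-(1 - (ξ:ℂ) ^ 2) * z / 4)) =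
      ∑' k : ℕ, (-z) ^ k * (k.factorial : ℂ) / ((2 * k + 1).factorial : ℂ) ∧
    Summable (fun k : ℕ =>
      ‖(-z) ^ k * (k.factorial : ℂ) / ((2 * k + 1).factorial : ℂ)‖) := by
  refine ⟨?_, summable_norm_pow_mul_factorial_div_factorial_two_mul_add_one z⟩
  have hsum := hasSum_intervalIntegral_pow_div_factorial
    (f := fun t => -z / 4 * ((1 - t ^ 2 : ℝ) : ℂ)) (by fun_prop) 0 1
  simp only [integral_mul_one_sub_sq_pow_div_factorial] at hsum
  rw [hsum.tsum_eq]
  congr 1 with ξ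
  congr 1
  push_cast
  ring
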